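/- arXiv:1406.7478 — 4 statements merged into one kernel-verified Lean document; each statement's English description precedes it below -/
import Mathlib

section
/- Let a, x₀, β, g, c, δ be real numbers with a ≥ 0, x₀ > 1/2, β > 3, g > 1, c > 0, 2δ − c = (β−2)(g−1), and δ/c > x₀. Suppose that for every α ∈ [0,1] one has α²·(3δ − c) − α·(2(β−3)/(β−2))·(2δ − c) + a ≥ 0. Then g ≤ 1 + a·((β−2)/(β−3)²)·(3x₀−1)/(2x₀−1). -/
theorem stmt7 (a x₀ β g c δ : ℝ) (ha : 0 ≤ a) (hx₀ : 1 / 2 < x₀) (hβ : 3 < β)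
    (hg : 1 < g) (hc : 0 < c) (hδ : 2 * δ - c = (β - 2) * (g - 1)) (hx : x₀ < δ / c)
    (h : ∀ α ∈ Set.Icc (0 : ℝ) 1,
      α ^ 2 * (3 * δ - c) - α * (2 * (β - 3) / (β - 2)) * (2 * δ - c) + a ≥ 0) :
    g ≤ 1 + a * ((β - 2) / (β - 3) ^ 2) * ((3 * x₀ - 1) / (2 * x₀ - 1)) := by
  have hg1 : 0 < g - 1 := by linarith
  have hβ2 : 0 < β - 2 := by linarith
  have hβ3 : 0 < β - 3 := by linarith
  have ht : 0 < 2 * δ - c := by rw [hδ]; positivity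
  have hA : 0 < 3 * δ - c := by nlinarith
  have hδc : x₀ * c < δ := (lt_div_iff₀ hc).mp hx
  have h2x : (0:ℝ) < 2 * x₀ - 1 := by linarith
  -- the minimizer
  set α : ℝ := (β - 3) * (g - 1) / (3 * δ - c) with hα
  have hα0 : 0 ≤ α := by positivity
  have hα1 : α ≤ 1 := by
    rw [hα, div_le_one hA]; nlinarith
  have h' := h α ⟨hα0, hα1⟩
  -- value of the quadratic at the minimizer
  have he : α ^ 2 * (3 * δ - c) - α * (2 * (β - 3) / (β - 2)) * (2 * δ - c) + a
      = a - (β - 3) ^ 2 * (g - 1) ^ 2 / (3 * δ - c) := by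
    rw [hα, hδ]
    field_simp
    ring
  rw [he] at h'
  have hkey : (β - 3) ^ 2 * (g - 1) ^ 2 ≤ a * (3 * δ - c) := by
    have h1 : (β - 3) ^ 2 * (g - 1) ^ 2 / (3 * δ - c) ≤ a := by linarith
    calc (β - 3) ^ 2 * (g - 1) ^ 2
        = (β - 3) ^ 2 * (g - 1) ^ 2 / (3 * δ - c) * (3 * δ - c) := by
          field_simp
      _ ≤ a * (3 * δ - c) := by
          exact mul_le_mul_of_nonneg_right h1 (le_of_lt hA)
  set P : ℝ := (3 * x₀ - 1) / (2 * x₀ - 1) with hP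
  have h3 : 3 * δ - c ≤ (2 * δ - c) * P := by
    rw [hP, mul_div_assoc']
    rw [le_div_iff₀ h2x]
    nlinarith
  have hchain : (β - 3) ^ 2 * (g - 1) ^ 2 ≤ a * ((β - 2) * (g - 1)) * P := by
    calc (β - 3) ^ 2 * (g - 1) ^ 2 ≤ a * (3 * δ - c) := hkey
      _ ≤ a * ((2 * δ - c) * P) := mul_le_mul_of_nonneg_left h3 ha
      _ = a * ((β - 2) * (g - 1)) * P := by rw [hδ]; ring
  have h4 : (g - 1) * ((β - 3) ^ 2 * (g - 1)) ≤ (g - 1) * (a * (β - 2) * P) := by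
    have e1 : (g - 1) * ((β - 3) ^ 2 * (g - 1)) = (β - 3) ^ 2 * (g - 1) ^ 2 := by ring
    have e2 : (g - 1) * (a * (β - 2) * P) = a * ((β - 2) * (g - 1)) * P := by ring
    rw [e1, e2]; exact hchain
  have h5 : (β - 3) ^ 2 * (g - 1) ≤ a * (β - 2) * P := le_of_mul_le_mul_left h4 hg1
  have hβ3sq : (0:ℝ) < (β - 3) ^ 2 := by positivity
  have hfin : g - 1 ≤ a * (β - 2) * P / (β - 3) ^ 2 := by
    rw [le_div_iff₀ hβ3sq]
    calc (g - 1) * (β - 3) ^ 2 = (β - 3) ^ 2 * (g - 1) := by ring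
      _ ≤ a * (β - 2) * P := h5
  have he2 : a * ((β - 2) / (β - 3) ^ 2) * P = a * (β - 2) * P / (β - 3) ^ 2 := by ring
  rw [hP] at he2
  linarith [hfin, he2.ge, he2.le]
end

section
/- Let a, x₀, β, g, c, δ be real numbers with a ≥ 0, x₀ > 1/2, β > 3, g > 1, c > 0, 2δ − c = (β−2)(g−1), and δ/c > x₀. Suppose that for every α ∈ [0,1] one has α²·(3δ − c) − α·(2(β−3)/(β−2))·(2δ − c) + a ≥ 0. Then k := β(g−1) satisfies k ≤ 2(g−1) + a·((β−2)²/(β−3)²)·(3x₀−1)/(2x₀−1). -/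
set_option maxHeartbeats 1000000


theorem stmt8 (a x₀ β g c δ : ℝ) (ha : 0 ≤ a) (hx₀ : 1 / 2 < x₀) (hβ : 3 < β)
    (hg : 1 < g) (hc : 0 < c) (hδ : 2 * δ - c = (β - 2) * (g - 1)) (hx : x₀ < δ / c)
    (h : ∀ α ∈ Set.Icc (0 : ℝ) 1,
      α ^ 2 * (3 * δ - c) - α * (2 * (β - 3) / (β - 2)) * (2 * δ - c) + a ≥ 0) :
    β * (g - 1) ≤ 2 * (g - 1) + a * ((β - 2) ^ 2 / (β - 3) ^ 2) * ((3 * x₀ - 1) / (2 * x₀ - 1)) := by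
  have hβ2 : (0:ℝ) < β - 2 := by linarith
  have hβ3 : (0:ℝ) < β - 3 := by linarith
  have hxc : x₀ * c < δ := by
    have := (lt_div_iff₀ hc).mp hx; linarith
  have hP : 0 < 2 * δ - c := by rw [hδ]; exact mul_pos hβ2 (by linarith)
  have hQ : 0 < 3 * δ - c := by nlinarith
  set α : ℝ := (β - 3) / (β - 2) * ((2 * δ - c) / (3 * δ - c)) with hαdef
  have hα0 : 0 ≤ α := by positivity
  have h1 : (β - 3) / (β - 2) ≤ 1 := by
    rw [div_le_one hβ2]; linarith
  have h2 : (2 * δ - c) / (3 * δ - c) ≤ 1 := by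
    rw [div_le_one hQ]; nlinarith
  have hα1 : α ≤ 1 := by
    calc α ≤ 1 * 1 := by
            apply mul_le_mul h1 h2 (by positivity) (by norm_num)
      _ = 1 := by ring
  have key := h α ⟨hα0, hα1⟩
  have hE : α ^ 2 * (3 * δ - c) - α * (2 * (β - 3) / (β - 2)) * (2 * δ - c) + a
      = a - (β - 3) ^ 2 * (2 * δ - c) ^ 2 / ((β - 2) ^ 2 * (3 * δ - c)) := by
    rw [hαdef]; field_simp; ring
  rw [hE, ge_iff_le, ← sub_nonneg] at key
  have key2 : (β - 3) ^ 2 * (2 * δ - c) ^ 2 ≤ a * ((β - 2) ^ 2 * (3 * δ - c)) := by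
    have hk : (β - 3) ^ 2 * (2 * δ - c) ^ 2 / ((β - 2) ^ 2 * (3 * δ - c)) ≤ a := by linarith
    exact (div_le_iff₀ (by positivity)).mp hk
  have hfact : (3 * δ - c) * (2 * x₀ - 1) ≤ (2 * δ - c) * (3 * x₀ - 1) := by nlinarith
  have hx2 : 0 < 2 * x₀ - 1 := by linarith
  have s1 : (β - 3) ^ 2 * (2 * δ - c) ^ 2 * (2 * x₀ - 1)
      ≤ a * ((β - 2) ^ 2 * (3 * δ - c)) * (2 * x₀ - 1) :=
    mul_le_mul_of_nonneg_right key2 hx2.le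
  have s2 : a * (β - 2) ^ 2 * ((3 * δ - c) * (2 * x₀ - 1))
      ≤ a * (β - 2) ^ 2 * ((2 * δ - c) * (3 * x₀ - 1)) :=
    mul_le_mul_of_nonneg_left hfact (by positivity)
  have s3 : (2 * δ - c) * ((β - 3) ^ 2 * (2 * x₀ - 1)) * (2 * δ - c)
      ≤ a * (β - 2) ^ 2 * (3 * x₀ - 1) * (2 * δ - c) := by linarith [s1, s2]
  have hmain : (2 * δ - c) * ((β - 3) ^ 2 * (2 * x₀ - 1)) ≤ a * (β - 2) ^ 2 * (3 * x₀ - 1) :=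
    le_of_mul_le_mul_right s3 hP
  have hrhs : a * ((β - 2) ^ 2 / (β - 3) ^ 2) * ((3 * x₀ - 1) / (2 * x₀ - 1))
      = a * (β - 2) ^ 2 * (3 * x₀ - 1) / ((β - 3) ^ 2 * (2 * x₀ - 1)) := by
    field_simp
  have hfin : 2 * δ - c ≤ a * ((β - 2) ^ 2 / (β - 3) ^ 2) * ((3 * x₀ - 1) / (2 * x₀ - 1)) := by
    rw [hrhs, le_div_iff₀ (by positivity)]
    linarith
  have hfin2 : (β - 2) * (g - 1)
      ≤ a * ((β - 2) ^ 2 / (β - 3) ^ 2) * ((3 * x₀ - 1) / (2 * x₀ - 1)) := hδ ▸ hfin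
  nlinarith [hfin2]
end

section
/- Let a ≥ 0 and β₀ > 3 be real numbers, and let (gₙ), (βₙ), (cₙ), (δₙ) be sequences of real numbers such that for all n: gₙ > 1, βₙ > β₀, cₙ > 0, 2δₙ − cₙ = (βₙ−2)(gₙ−1), and for every α ∈ [0,1], α²·(3δₙ − cₙ) − α·(2(βₙ−3)/(βₙ−2))·(2δₙ − cₙ) + a ≥ 0. If gₙ → ∞, then δₙ/cₙ → 1/2. -/
open Filter

lemma stmt10_aux (a M₀ Mn s c : ℝ) (ha : 0 ≤ a) (hM₀ : 0 < M₀) (hM : M₀ ≤ Mn)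
    (hMn2 : Mn < 2) (hs : 0 < s) (hc : 0 < c)
    (h : ∀ α ∈ Set.Icc (0 : ℝ) 1, α ^ 2 * ((3 * s + c) / 2) - α * Mn * s + a ≥ 0) :
    2 * a * (3 * s + c) ≥ M₀ ^ 2 * s ^ 2 := by
  have hMn : 0 < Mn := lt_of_lt_of_le hM₀ hM
  have hD : 0 < 3 * s + c := by linarith
  have hD' : (3 * s + c) ≠ 0 := ne_of_gt hD
  set α : ℝ := Mn * s / (3 * s + c) with hα
  have hα0 : 0 ≤ α := by positivity
  have hα1 : α ≤ 1 := by
    rw [hα, div_le_one hD]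
    nlinarith [mul_lt_mul_of_pos_right hMn2 hs]
  have H := h α ⟨hα0, hα1⟩
  rw [hα, div_pow] at H
  have H2 : Mn ^ 2 * s ^ 2 ≤ 2 * a * (3 * s + c) := by
    have h1 : (Mn * s) ^ 2 / (3 * s + c) ^ 2 * ((3 * s + c) / 2) =
        Mn ^ 2 * s ^ 2 / (2 * (3 * s + c)) := by field_simp
    have h2 : Mn * s / (3 * s + c) * Mn * s = Mn ^ 2 * s ^ 2 / (3 * s + c) := by
      field_simp
    rw [h1, h2] at H
    have h3 : Mn ^ 2 * s ^ 2 / (2 * (3 * s + c)) - Mn ^ 2 * s ^ 2 / (3 * s + c) =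
        -(Mn ^ 2 * s ^ 2 / (2 * (3 * s + c))) := by field_simp; ring
    rw [h3] at H
    have h4 : Mn ^ 2 * s ^ 2 / (2 * (3 * s + c)) ≤ a := by linarith
    have h5 : Mn ^ 2 * s ^ 2 ≤ a * (2 * (3 * s + c)) :=
      (div_le_iff₀ (by positivity)).mp h4
    linarith
  have H3 : M₀ ^ 2 ≤ Mn ^ 2 := by nlinarith
  nlinarith [sq_nonneg s, H2, H3]

theorem stmt10 (a β₀ : ℝ) (ha : 0 ≤ a) (hβ₀ : 3 < β₀) (g β c δ : ℕ → ℝ)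
    (hg : ∀ n, 1 < g n) (hβ : ∀ n, β₀ < β n) (hc : ∀ n, 0 < c n)
    (hδ : ∀ n, 2 * δ n - c n = (β n - 2) * (g n - 1))
    (h : ∀ n, ∀ α ∈ Set.Icc (0 : ℝ) 1,
      α ^ 2 * (3 * δ n - c n) - α * (2 * (β n - 3) / (β n - 2)) * (2 * δ n - c n) + a ≥ 0)
    (hgtop : Tendsto g atTop atTop) :
    Tendsto (fun n => δ n / c n) atTop (nhds (1 / 2)) := by
  have hβ₀2 : (0 : ℝ) < β₀ - 2 := by linarith
  set M₀ : ℝ := 2 * (β₀ - 3) / (β₀ - 2) with hM₀def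
  have hM₀ : 0 < M₀ := by
    apply div_pos ?_ hβ₀2; linarith
  set s : ℕ → ℝ := fun n => 2 * δ n - c n with hs
  have hspos : ∀ n, 0 < s n := by
    intro n
    have h1 : 0 < β n - 2 := by have := hβ n; linarith
    have h2 : 0 < g n - 1 := by have := hg n; linarith
    simp only [hs]; rw [hδ n]; positivity
  have hkey : ∀ n, 2 * a * (3 * s n + c n) ≥ M₀ ^ 2 * (s n) ^ 2 := by
    intro n
    have hβn2 : (0 : ℝ) < β n - 2 := by have := hβ n; linarith
    have hM : M₀ ≤ 2 * (β n - 3) / (β n - 2) := by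
      rw [hM₀def, div_le_div_iff₀ hβ₀2 hβn2]
      have := hβ n; nlinarith
    have hMn2 : 2 * (β n - 3) / (β n - 2) < 2 := by
      rw [div_lt_iff₀ hβn2]; linarith
    apply stmt10_aux a M₀ _ (s n) (c n) ha hM₀ hM hMn2 (hspos n) (hc n)
    intro α hα
    have H := h n α hα
    have e1 : 3 * δ n - c n = (3 * s n + c n) / 2 := by simp only [hs]; ring
    have e2 : 2 * δ n - c n = s n := by simp only [hs]
    rw [e1, e2] at H
    linarith [H]
  have hsTop : Tendsto s atTop atTop := by
    apply tendsto_atTop_mono ?_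
      (Tendsto.const_mul_atTop hβ₀2 (tendsto_atTop_add_const_right atTop (-1) hgtop))
    intro n
    have h1 : β₀ - 2 ≤ β n - 2 := by have := hβ n; linarith
    have h2 : 0 ≤ g n - 1 := by have := hg n; linarith
    simp only [hs]
    rw [hδ n]
    have : g n + (-1) = g n - 1 := by ring
    rw [this]
    exact mul_le_mul_of_nonneg_right h1 h2
  have hM₀sq : (0 : ℝ) < M₀ ^ 2 := by positivity
  have hTtop : Tendsto (fun n => M₀ ^ 2 * s n - 6 * a) atTop atTop := by
    have := tendsto_atTop_add_const_right atTop (-(6 * a))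
      (Tendsto.const_mul_atTop hM₀sq hsTop)
    simpa [sub_eq_add_neg] using this
  have hT0 : ∀ᶠ n in atTop, 0 < M₀ ^ 2 * s n - 6 * a := hTtop.eventually_gt_atTop 0
  have hbound : ∀ᶠ n in atTop, s n / c n ≤ 2 * a / (M₀ ^ 2 * s n - 6 * a) := by
    filter_upwards [hT0] with n hn
    rw [div_le_div_iff₀ (hc n) hn]
    nlinarith [hkey n, hspos n]
  have htend0 : Tendsto (fun n => 2 * a / (M₀ ^ 2 * s n - 6 * a)) atTop (nhds 0) :=
    Tendsto.div_atTop tendsto_const_nhds hTtop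
  have hsq : Tendsto (fun n => s n / c n) atTop (nhds 0) :=
    squeeze_zero' (Eventually.of_forall fun n => (div_pos (hspos n) (hc n)).le) hbound htend0
  have heq : (fun n => δ n / c n) = fun n => (s n / c n + 1) / 2 := by
    funext n
    have hcn : c n ≠ 0 := ne_of_gt (hc n)
    simp only [hs]
    field_simp
    ring
  rw [heq]
  have := (hsq.add_const 1).div_const 2
  norm_num at this
  exact this
end

section
/- Let a ≥ 0 and β₀ > 3 be real numbers, and let (gₙ), (βₙ), (cₙ), (δₙ) be sequences of real numbers such that for all n: gₙ > 1, βₙ > β₀, cₙ > 0, 2δₙ − cₙ = (βₙ−2)(gₙ−1), and for every α ∈ [0,1], α²·(3δₙ − cₙ) − α·(2(βₙ−3)/(βₙ−2))·(2δₙ − cₙ) + a ≥ 0. If gₙ → ∞, then gₙ/δₙ → 0 and kₙ/δₙ → 0, where kₙ := βₙ(gₙ−1). -/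
open Filter

lemma quad_aux (A P a : ℝ) (hA : 0 < A) (ha : 0 ≤ a)
    (h : ∀ α ∈ Set.Icc (0:ℝ) 1, α ^ 2 * A - α * P + a ≥ 0) (hPa : 2 * a < P) :
    P ^ 2 ≤ 4 * a * A := by
  rcases le_or_gt P (2 * A) with hle | hlt
  · set x := P / (2 * A) with hxdef
    have hP0 : 0 ≤ P := by linarith
    have h2A : (0:ℝ) < 2 * A := by linarith
    have hx0 : 0 ≤ x := div_nonneg hP0 h2A.le
    have hx1 : x ≤ 1 := (div_le_one h2A).mpr hle
    have hx : x * (2 * A) = P := div_mul_cancel₀ _ h2A.ne'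
    have h' := h x ⟨hx0, hx1⟩
    have hP2 : P ^ 2 = 4 * A ^ 2 * x ^ 2 := by rw [← hx]; ring
    have h3 : A * (x * P) = 2 * A ^ 2 * x ^ 2 := by rw [← hx]; ring
    nlinarith [h', hP2, h3, hA]
  · have h1 := h 1 ⟨zero_le_one, le_rfl⟩
    nlinarith [h1]

theorem stmt11 (a β₀ : ℝ) (ha : 0 ≤ a) (hβ₀ : 3 < β₀) (g β c δ : ℕ → ℝ)
    (hg : ∀ n, 1 < g n) (hβ : ∀ n, β₀ < β n) (hc : ∀ n, 0 < c n)
    (hδ : ∀ n, 2 * δ n - c n = (β n - 2) * (g n - 1))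
    (h : ∀ n, ∀ α ∈ Set.Icc (0 : ℝ) 1,
      α ^ 2 * (3 * δ n - c n) - α * (2 * (β n - 3) / (β n - 2)) * (2 * δ n - c n) + a ≥ 0)
    (hgtop : Tendsto g atTop atTop) :
    Tendsto (fun n => g n / δ n) atTop (nhds 0) ∧
      Tendsto (fun n => β n * (g n - 1) / δ n) atTop (nhds 0) := by
  have hb3 : ∀ n, 3 < β n := fun n => hβ₀.trans (hβ n)
  have hg1 : ∀ n, 0 < g n - 1 := fun n => by linarith [hg n]
  set t : ℕ → ℝ := fun n => (β n - 2) * (g n - 1) with ht_def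
  have htpos : ∀ n, 0 < t n := fun n =>
    mul_pos (by linarith [hb3 n]) (hg1 n)
  have hδpos : ∀ n, 0 < δ n := fun n => by
    have h1 := hδ n
    have := htpos n
    simp only [ht_def] at this
    linarith [hc n]
  set r : ℝ := (β₀ - 3) / (β₀ - 2) with hr_def
  have hb20 : (0:ℝ) < β₀ - 2 := by linarith
  have hr0 : 0 < r := div_pos (by linarith) hb20
  have hr1 : r < 1 := (div_lt_one hb20).mpr (by linarith)
  -- the quadratic consequence
  have key : ∀ n, 2 * a < 2 * (β n - 3) / (β n - 2) * t n →
      (2 * (β n - 3) / (β n - 2) * t n) ^ 2 ≤ 4 * a * (δ n + t n) := by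
    intro n hn
    have hA : 0 < δ n + t n := by linarith [hδpos n, htpos n]
    refine quad_aux _ _ _ hA ha ?_ hn
    intro α hα
    have h0 := h n α hα
    have e1 : α * (2 * (β n - 3) / (β n - 2)) * (2 * δ n - c n)
        = α * (2 * (β n - 3) / (β n - 2) * t n) := by
      rw [hδ n]; ring
    have e2 : 3 * δ n - c n = δ n + t n := by
      have := hδ n; simp only [ht_def]; linarith
    have e0 : α ^ 2 * (3 * δ n - c n) = α ^ 2 * (δ n + t n) := by rw [e2]
    linarith [h0, e0, e1]
  -- lower bound on P
  have hPr : ∀ n, 2 * r * t n < 2 * (β n - 3) / (β n - 2) * t n := by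
    intro n
    have hb2n : (0:ℝ) < β n - 2 := by linarith [hb3 n]
    have hlt : r < (β n - 3) / (β n - 2) := by
      rw [hr_def, div_lt_div_iff₀ hb20 hb2n]
      nlinarith [hβ n]
    have : 2 * (β n - 3) / (β n - 2) = 2 * ((β n - 3) / (β n - 2)) := by ring
    rw [this]
    have := mul_lt_mul_of_pos_right (by linarith : 2 * r < 2 * ((β n - 3) / (β n - 2))) (htpos n)
    linarith
  -- a must be positive
  have ha0 : 0 < a := by
    rcases ha.lt_or_eq with h' | h'
    · exact h'
    · exfalso
      have hP0 : 0 < 2 * (β 0 - 3) / (β 0 - 2) * t 0 := by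
        have := hPr 0
        have := mul_pos (mul_pos (by norm_num : (0:ℝ) < 2) hr0) (htpos 0)
        linarith
      have hk := key 0 (by linarith)
      rw [← h'] at hk
      nlinarith [hP0, hk]
  -- t tends to infinity
  have httop : Tendsto t atTop atTop := by
    have h1 : Tendsto (fun n => (β₀ - 2) * (g n - 1)) atTop atTop := by
      apply Tendsto.const_mul_atTop hb20
      have := tendsto_atTop_add_const_right atTop (-1 : ℝ) hgtop
      simpa [sub_eq_add_neg] using this
    apply tendsto_atTop_mono _ h1
    intro n
    exact mul_le_mul_of_nonneg_right (by linarith [hβ n]) (hg1 n).le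
  -- eventual bounds
  have hE : ∀ᶠ n in atTop, (a + 1) / r ^ 2 ≤ t n := httop.eventually_ge_atTop _
  have hmain : ∀ n, (a + 1) / r ^ 2 ≤ t n →
      t n / δ n ≤ a / (r ^ 2 * t n - a) ∧ t n / a ≤ δ n := by
    intro n hM
    have hr2 : (0:ℝ) < r ^ 2 := by positivity
    have h1 : a + 1 ≤ r ^ 2 * t n := by
      have := (div_le_iff₀ hr2).mp hM
      linarith
    have htn := htpos n
    have hPa : 2 * a < 2 * (β n - 3) / (β n - 2) * t n := by
      have h2 : r ^ 2 * t n < r * t n := by nlinarith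
      have := hPr n
      linarith
    have hkey := key n hPa
    have hP2 : (2 * r * t n) ^ 2 ≤ (2 * (β n - 3) / (β n - 2) * t n) ^ 2 := by
      have hp := hPr n
      have h0 : 0 ≤ 2 * r * t n := by positivity
      nlinarith
    have hδbig : t n * (r ^ 2 * t n - a) ≤ a * δ n := by nlinarith
    constructor
    · rw [div_le_div_iff₀ (hδpos n) (by linarith)]
      linarith
    · rw [div_le_iff₀ ha0]
      nlinarith [hδpos n]
  -- t / δ → 0
  have hden : Tendsto (fun n => r ^ 2 * t n - a) atTop atTop := by
    have := (httop.const_mul_atTop (by positivity : (0:ℝ) < r ^ 2))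
    have h2 := tendsto_atTop_add_const_right atTop (-a) this
    simpa [sub_eq_add_neg] using h2
  have hu : Tendsto (fun n => a / (r ^ 2 * t n - a)) atTop (nhds 0) :=
    tendsto_const_nhds.div_atTop hden
  have htδ : Tendsto (fun n => t n / δ n) atTop (nhds 0) := by
    refine tendsto_of_tendsto_of_tendsto_of_le_of_le' tendsto_const_nhds hu ?_ ?_
    · exact Eventually.of_forall fun n => div_nonneg (htpos n).le (hδpos n).le
    · exact hE.mono fun n hn => (hmain n hn).1
  -- δ → ∞ and 1/δ → 0
  have hδtop : Tendsto δ atTop atTop := by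
    refine tendsto_atTop_mono' atTop (hE.mono fun n hn => (hmain n hn).2) ?_
    exact httop.atTop_div_const ha0
  have hone : Tendsto (fun n => 1 / δ n) atTop (nhds 0) :=
    tendsto_const_nhds.div_atTop hδtop
  constructor
  · -- g / δ → 0
    have hup : Tendsto (fun n => t n / δ n * (β₀ - 2)⁻¹ + 1 / δ n) atTop (nhds 0) := by
      have := (htδ.mul_const ((β₀ - 2)⁻¹)).add hone
      simpa using this
    refine tendsto_of_tendsto_of_tendsto_of_le_of_le' tendsto_const_nhds hup ?_ ?_
    · exact Eventually.of_forall fun n => div_nonneg (by linarith [hg n]) (hδpos n).le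
    · refine Eventually.of_forall fun n => ?_
      have e : t n / δ n * (β₀ - 2)⁻¹ + 1 / δ n = (t n * (β₀ - 2)⁻¹ + 1) / δ n := by ring
      rw [e, div_le_div_iff_of_pos_right (hδpos n)]
      have hstep : (g n - 1) * (β₀ - 2) ≤ t n := by
        simp only [ht_def]
        nlinarith [hg1 n, hβ n]
      have h2 : g n - 1 ≤ t n * (β₀ - 2)⁻¹ := by
        rw [← div_eq_mul_inv, le_div_iff₀ hb20]
        exact hstep
      linarith
  · -- β (g−1) / δ → 0
    have hup : Tendsto (fun n => t n / δ n * (β₀ / (β₀ - 2))) atTop (nhds 0) := by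
      have := htδ.mul_const (β₀ / (β₀ - 2))
      simpa using this
    refine tendsto_of_tendsto_of_tendsto_of_le_of_le' tendsto_const_nhds hup ?_ ?_
    · exact Eventually.of_forall fun n =>
        div_nonneg (mul_nonneg (by linarith [hb3 n]) (hg1 n).le) (hδpos n).le
    · refine Eventually.of_forall fun n => ?_
      have e : t n / δ n * (β₀ / (β₀ - 2)) = t n * (β₀ / (β₀ - 2)) / δ n := by ring
      rw [e, div_le_div_iff_of_pos_right (hδpos n)]
      have hnum : β n * (g n - 1) * (β₀ - 2) ≤ t n * β₀ := by
        simp only [ht_def]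
        nlinarith [mul_pos (hg1 n) (show 0 < β n - β₀ by linarith [hβ n]), hg1 n, hβ n]
      rw [mul_div_assoc', le_div_iff₀ hb20]
      exact hnum
end
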